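/- arXiv:2003.07087 — 4 statements merged into one kernel-verified Lean document; each statement's English description precedes it below -/
import Mathlib

section
/- With the classical measurement dilation setup, the entropy increase of the memory compensates the entropy decrease of the object: H(Q2) ≥ H(p) − H(q), where Q2(j) = ∑_{i∈I_j} p_i is the distribution of measurement outcomes, q is the pushforward of p along φ, and H denotes Shannon entropy. -/
noncomputable def shannonEntropy {I : Type*} [Fintype I] (p : I → ℝ) : ℝ :=
  -∑ i, p i * Real.log (p i)

theorem memory_entropy_compensates {I J : Type*} [Fintype I] [Fintype J]
    [DecidableEq I] [DecidableEq J]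
    (blk : I → J) (φ : I → I) (hφ : ∀ j, Set.InjOn φ {i | blk i = j})
    (p : I → ℝ) (hp0 : ∀ i, 0 ≤ p i) (hsum : ∑ i, p i = 1)
    (q : I → ℝ)
    (hq : ∀ i, q i = ∑ k ∈ Finset.univ.filter (fun k => φ k = i), p k)
    (Q2 : J → ℝ)
    (hQ2 : ∀ j, Q2 j = ∑ i ∈ Finset.univ.filter (fun i => blk i = j), p i) :
    shannonEntropy Q2 ≥ shannonEntropy p - shannonEntropy q := by
  -- positivity facts
  have hq0 : ∀ i, 0 ≤ q i := by
    intro i; rw [hq]; exact Finset.sum_nonneg fun k _ => hp0 k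
  have hQ20 : ∀ j, 0 ≤ Q2 j := by
    intro j; rw [hQ2]; exact Finset.sum_nonneg fun k _ => hp0 k
  have hqsum : ∑ i, q i = 1 := by
    rw [← hsum]
    calc ∑ i, q i = ∑ i, ∑ k ∈ Finset.univ.filter (fun k => φ k = i), p k := by
          simp_rw [hq]
      _ = ∑ k, p k := Finset.sum_fiberwise _ _ _
  have hQ2sum : ∑ j, Q2 j = 1 := by
    rw [← hsum]
    calc ∑ j, Q2 j = ∑ j, ∑ i ∈ Finset.univ.filter (fun i => blk i = j), p i := by
          simp_rw [hQ2]
      _ = ∑ i, p i := Finset.sum_fiberwise _ _ _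
  -- p k ≤ q (φ k), p k ≤ Q2 (blk k)
  have hpq : ∀ k, p k ≤ q (φ k) := by
    intro k; rw [hq]
    exact Finset.single_le_sum (fun i _ => hp0 i) (by simp)
  have hpQ2 : ∀ k, p k ≤ Q2 (blk k) := by
    intro k; rw [hQ2]
    exact Finset.single_le_sum (fun i _ => hp0 i) (by simp)
  -- injectivity of k ↦ (φ k, blk k)
  have hinj : Function.Injective (fun k => (φ k, blk k)) := by
    intro a b hab
    simp only [Prod.mk.injEq] at hab
    exact hφ (blk b) (by simpa using hab.2) rfl hab.1
  -- ∑ k, q (φ k) * Q2 (blk k) ≤ 1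
  have hprod : ∑ k, q (φ k) * Q2 (blk k) ≤ 1 := by
    have h1 : ∑ k, q (φ k) * Q2 (blk k)
        = ∑ x ∈ Finset.univ.image (fun k => (φ k, blk k)), q x.1 * Q2 x.2 := by
      rw [Finset.sum_image (fun a _ b _ h => hinj h)]
    rw [h1]
    calc ∑ x ∈ Finset.univ.image (fun k => (φ k, blk k)), q x.1 * Q2 x.2
        ≤ ∑ x : I × J, q x.1 * Q2 x.2 :=
          Finset.sum_le_sum_of_subset_of_nonneg (Finset.subset_univ _)
            (fun x _ _ => mul_nonneg (hq0 x.1) (hQ20 x.2))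
      _ = (∑ i, q i) * (∑ j, Q2 j) := by
          rw [Finset.sum_mul_sum, Fintype.sum_prod_type]
      _ = 1 := by rw [hqsum, hQ2sum, one_mul]
  -- fiberwise rewriting of the marginal entropies
  have hqent : ∑ i, q i * Real.log (q i) = ∑ k, p k * Real.log (q (φ k)) := by
    calc ∑ i, q i * Real.log (q i)
        = ∑ i, ∑ k ∈ Finset.univ.filter (fun k => φ k = i), p k * Real.log (q (φ k)) := by
          refine Finset.sum_congr rfl fun i _ => ?_
          rw [hq, Finset.sum_mul]
          refine Finset.sum_congr rfl fun k hk => ?_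
          rw [(Finset.mem_filter.mp hk).2, ← hq]
      _ = ∑ k, p k * Real.log (q (φ k)) := Finset.sum_fiberwise _ _ _
  have hQ2ent : ∑ j, Q2 j * Real.log (Q2 j) = ∑ k, p k * Real.log (Q2 (blk k)) := by
    calc ∑ j, Q2 j * Real.log (Q2 j)
        = ∑ j, ∑ k ∈ Finset.univ.filter (fun k => blk k = j), p k * Real.log (Q2 (blk k)) := by
          refine Finset.sum_congr rfl fun j _ => ?_
          rw [hQ2, Finset.sum_mul]
          refine Finset.sum_congr rfl fun k hk => ?_
          rw [(Finset.mem_filter.mp hk).2, ← hQ2]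
      _ = ∑ k, p k * Real.log (Q2 (blk k)) := Finset.sum_fiberwise _ _ _
  -- termwise Gibbs inequality
  have hterm : ∀ k, p k * Real.log (q (φ k)) + p k * Real.log (Q2 (blk k))
      ≤ q (φ k) * Q2 (blk k) - p k + p k * Real.log (p k) := by
    intro k
    rcases eq_or_lt_of_le (hp0 k) with h0 | h0
    · rw [← h0]
      simp [mul_nonneg (hq0 (φ k)) (hQ20 (blk k))]
    · have hq' : 0 < q (φ k) := lt_of_lt_of_le h0 (hpq k)
      have hQ2' : 0 < Q2 (blk k) := lt_of_lt_of_le h0 (hpQ2 k)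
      have hx : 0 < q (φ k) * Q2 (blk k) / p k := by positivity
      have := Real.log_le_sub_one_of_pos hx
      rw [Real.log_div (by positivity) (ne_of_gt h0), Real.log_mul (ne_of_gt hq') (ne_of_gt hQ2')] at this
      have h2 : p k * (Real.log (q (φ k)) + Real.log (Q2 (blk k)) - Real.log (p k))
          ≤ p k * (q (φ k) * Q2 (blk k) / p k - 1) :=
        mul_le_mul_of_nonneg_left this (le_of_lt h0)
      have h3 : p k * (q (φ k) * Q2 (blk k) / p k - 1)
          = q (φ k) * Q2 (blk k) - p k := by
        field_simp
      linarith [h2, h3 ▸ h2]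
  -- combine
  have hmain : ∑ i, q i * Real.log (q i) + ∑ j, Q2 j * Real.log (Q2 j)
      ≤ ∑ k, p k * Real.log (p k) := by
    rw [hqent, hQ2ent, ← Finset.sum_add_distrib]
    calc ∑ k, (p k * Real.log (q (φ k)) + p k * Real.log (Q2 (blk k)))
        ≤ ∑ k, (q (φ k) * Q2 (blk k) - p k + p k * Real.log (p k)) :=
          Finset.sum_le_sum fun k _ => hterm k
      _ = (∑ k, q (φ k) * Q2 (blk k)) - (∑ k, p k) + ∑ k, p k * Real.log (p k) := by
          rw [Finset.sum_add_distrib, Finset.sum_sub_distrib]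
      _ ≤ ∑ k, p k * Real.log (p k) := by rw [hsum]; linarith [hprod]
  unfold shannonEntropy
  linarith [hmain]
end

section
/- Proposition 1 (Maxwell operation does not exceed Lüders entropy): Let (P_n)_{n∈N} be a complete family of mutually orthogonal projections on a finite-dimensional Hilbert space, (U_n) unitaries, and ρ a density matrix. Then S(∑_n U_n P_n ρ P_n U_n*) ≤ S(∑_n P_n ρ P_n). -/
open Matrix
open scoped ComplexOrder

/-- Von Neumann entropy of a matrix: `-∑ λᵢ log λᵢ` over the eigenvalues if the
matrix is Hermitian (junk value `0` otherwise). -/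
noncomputable def vnEntropy {d : Type*} [Fintype d] [DecidableEq d]
    (A : Matrix d d ℂ) : ℝ :=
  if h : A.IsHermitian then -∑ i, h.eigenvalues i * Real.log (h.eigenvalues i) else 0

/-!
Spectrally decompose each block `P_n ρ P_n = ∑_i κ_{n,i} |e_{n,i}⟩⟨e_{n,i}|`. The Lüders output is
the ensemble `∑ κ_{n,i} |e_{n,i}⟩⟨e_{n,i}|`; its vectors of nonzero weight are orthonormal, because
the blocks have mutually orthogonal ranges, so its entropy is exactly the Shannon entropy `H(κ)`.
The Maxwell output is the ensemble `∑ κ_{n,i} |U_n e_{n,i}⟩⟨U_n e_{n,i}|` of unit vectors, and the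
entropy of any ensemble of pure states is at most the Shannon entropy of its weights.

Both entropy statements compare the eigenvalues `μ_j` (eigenvectors `f_j`) of
`X = ∑ t_k |g_k⟩⟨g_k|` with the weights `t_k` through the coupling `w_{jk} = t_k |⟨f_j, g_k⟩|²`,
whose marginals are `μ` and `t`. For orthonormal `g` it is supported on `{μ_j = t_k}`, which gives
equality; in general `log x ≥ 1 - 1/x` reduces the inequality to `t_k ⟨g_k, X⁺ g_k⟩ ≤ 1`, which
holds because `X ≥ t_k |g_k⟩⟨g_k|`.
-/

namespace Real

theorem negMulLog_eq_neg_sum_mul_log {ι : Type*} (s : Finset ι) (a : ι → ℝ) {x : ℝ}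
    (hx : ∑ i ∈ s, a i = x) : negMulLog x = -∑ i ∈ s, a i * log x := by
  rw [negMulLog, ← Finset.sum_mul, hx, neg_mul]

variable {J K : Type*} [Fintype J] [Fintype K] (w : J → K → ℝ) (μ : J → ℝ) (t : K → ℝ)

theorem sum_negMulLog_eq_of_marginals
    (hrow : ∀ j, ∑ k, w j k = μ j) (hcol : ∀ k, ∑ j, w j k = t k)
    (hsupp : ∀ j k, w j k ≠ 0 → μ j = t k) :
    ∑ j, negMulLog (μ j) = ∑ k, negMulLog (t k) := by
  have hw : ∀ j k, w j k * log (μ j) = w j k * log (t k) := fun j k => by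
    by_cases h : w j k = 0
    · simp [h]
    · rw [hsupp j k h]
  simp only [fun j => negMulLog_eq_neg_sum_mul_log _ _ (hrow j),
    fun k => negMulLog_eq_neg_sum_mul_log _ _ (hcol k), hw, Finset.sum_neg_distrib]
  rw [Finset.sum_comm]

theorem sum_negMulLog_le_of_marginals (hw : ∀ j k, 0 ≤ w j k)
    (hrow : ∀ j, ∑ k, w j k = μ j) (hcol : ∀ k, ∑ j, w j k = t k)
    (hkey : ∀ k, ∑ j, w j k * (t k / μ j) ≤ t k) :
    ∑ j, negMulLog (μ j) ≤ ∑ k, negMulLog (t k) := by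
  -- `1 - 1/x ≤ log x` at `x = μ j / t k`, weighted by `w j k`
  have hlog : ∀ k j, w j k - w j k * (t k / μ j) ≤ w j k * log (μ j) - w j k * log (t k) := by
    intro k j
    rcases (hw j k).eq_or_lt with h | h
    · simp [← h]
    have hμ : 0 < μ j :=
      h.trans_le (hrow j ▸ Finset.single_le_sum (fun k _ => hw j k) (Finset.mem_univ k))
    have ht : 0 < t k :=
      h.trans_le (hcol k ▸ Finset.single_le_sum (fun j _ => hw j k) (Finset.mem_univ j))
    have := one_sub_inv_le_log_of_pos (div_pos hμ ht)
    rw [inv_div, log_div hμ.ne' ht.ne'] at this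
    nlinarith
  have hgap : 0 ≤ ∑ k, ∑ j, (w j k * log (μ j) - w j k * log (t k)) := calc
    0 ≤ ∑ k, (t k - ∑ j, w j k * (t k / μ j)) :=
      Finset.sum_nonneg fun k _ => sub_nonneg.2 (hkey k)
    _ = ∑ k, ∑ j, (w j k - w j k * (t k / μ j)) := by simp only [Finset.sum_sub_distrib, hcol]
    _ ≤ _ := Finset.sum_le_sum fun k _ => Finset.sum_le_sum fun j _ => hlog k j
  simp only [fun j => negMulLog_eq_neg_sum_mul_log _ _ (hrow j),
    fun k => negMulLog_eq_neg_sum_mul_log _ _ (hcol k), Finset.sum_sub_distrib,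
    Finset.sum_neg_distrib] at hgap ⊢
  rw [Finset.sum_comm (f := fun j k => w j k * log (μ j))]
  linarith

end Real

namespace Matrix

variable {d ι : Type*} [Fintype d]

noncomputable def ensemble [Fintype ι] (t : ι → ℝ) (g : ι → d → ℂ) : Matrix d d ℂ :=
  ∑ k, (t k : ℂ) • vecMulVec (g k) (star (g k))

omit [Fintype d] in
theorem sum_ensemble {N : Type*} [Fintype N] [Fintype ι] (t : N → ι → ℝ) (g : N → ι → d → ℂ) :
    ∑ n, ensemble (t n) (g n) = ensemble (fun p : N × ι => t p.1 p.2) fun p => g p.1 p.2 := by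
  simp only [ensemble, Fintype.sum_prod_type]

section Ensemble

variable [Fintype ι] (t : ι → ℝ) (g : ι → d → ℂ)

theorem isHermitian_ensemble : (ensemble t g).IsHermitian :=
  isSelfAdjoint_sum _ fun k _ =>
    (posSemidef_vecMulVec_self_star (g k)).isHermitian.smul (Complex.conj_ofReal (t k))

theorem ensemble_mulVec (y : d → ℂ) :
    ensemble t g *ᵥ y = ∑ k, ((t k : ℂ) * (star (g k) ⬝ᵥ y)) • g k := by
  simp only [ensemble, sum_mulVec, smul_mulVec, vecMulVec_mulVec, op_smul_eq_smul, smul_smul]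

theorem star_dotProduct_ensemble_mulVec (y : d → ℂ) :
    star y ⬝ᵥ (ensemble t g *ᵥ y) =
      ((∑ k, t k * Complex.normSq (star (g k) ⬝ᵥ y) : ℝ) : ℂ) := by
  simp only [ensemble_mulVec, dotProduct_sum, dotProduct_smul, smul_eq_mul]
  push_cast
  refine Finset.sum_congr rfl fun k _ => ?_
  rw [← Complex.mul_conj, star_dotProduct y, Complex.star_def]
  ring

theorem mul_ensemble_mul_conjTranspose (U : Matrix d d ℂ) :
    U * ensemble t g * Uᴴ = ensemble t fun k => U *ᵥ g k := by
  simp only [ensemble, Finset.mul_sum, Finset.sum_mul, mul_smul_comm, smul_mul_assoc,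
    mul_vecMulVec, vecMulVec_mul, star_mulVec]

theorem ensemble_mulVec_of_orthonormal (hg : ∀ k, star (g k) ⬝ᵥ g k = 1)
    (horth : ∀ k l, k ≠ l → t k ≠ 0 → t l ≠ 0 → star (g k) ⬝ᵥ g l = 0) {k : ι} (hk : t k ≠ 0) :
    ensemble t g *ᵥ g k = (t k : ℂ) • g k := by
  rw [ensemble_mulVec, Finset.sum_eq_single k, hg k, mul_one]
  · intro l _ hlk
    by_cases hl : t l = 0
    · simp [hl]
    · simp [horth l k hlk hl hk]
  · simp

end Ensemble

namespace IsHermitian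

variable [DecidableEq d] {A : Matrix d d ℂ} (hA : A.IsHermitian)

noncomputable def eigenvector (j : d) : d → ℂ :=
  hA.eigenvectorBasis j

theorem star_eigenvector_dotProduct_eigenvector (i j : d) :
    star (hA.eigenvector i) ⬝ᵥ hA.eigenvector j = if i = j then 1 else 0 := by
  rw [dotProduct_comm, ← orthonormal_iff_ite.mp hA.eigenvectorBasis.orthonormal i j]
  rfl

theorem mulVec_eigenvector (j : d) :
    A *ᵥ hA.eigenvector j = (hA.eigenvalues j : ℂ) • hA.eigenvector j := by
  rw [eigenvector, hA.mulVec_eigenvectorBasis, ← Complex.coe_smul]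

theorem star_eigenvector_dotProduct_mulVec (j : d) (y : d → ℂ) :
    star (hA.eigenvector j) ⬝ᵥ (A *ᵥ y) =
      hA.eigenvalues j * (star (hA.eigenvector j) ⬝ᵥ y) := by
  have hrow : star (hA.eigenvector j) ᵥ* A = star (A *ᵥ hA.eigenvector j) := by
    rw [star_mulVec, hA.eq]
  rw [dotProduct_mulVec, hrow, mulVec_eigenvector, star_smul, smul_dotProduct, Complex.star_def,
    Complex.conj_ofReal, smul_eq_mul]

theorem sum_star_eigenvector_dotProduct_smul (y : d → ℂ) :
    ∑ j, (star (hA.eigenvector j) ⬝ᵥ y) • hA.eigenvector j = y := by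
  have := congrArg WithLp.ofLp (hA.eigenvectorBasis.sum_repr' (WithLp.toLp 2 y))
  simpa [EuclideanSpace.inner_eq_star_dotProduct, dotProduct_comm, eigenvector] using this

theorem star_eigenvector_dotProduct_self (j : d) :
    star (hA.eigenvector j) ⬝ᵥ hA.eigenvector j = 1 :=
  (hA.star_eigenvector_dotProduct_eigenvector j j).trans (if_pos rfl)

theorem star_eigenvector_dotProduct_sum_smul (c : d → ℂ) (i : d) :
    star (hA.eigenvector i) ⬝ᵥ ∑ j, c j • hA.eigenvector j = c i := by
  simp [dotProduct_sum, dotProduct_smul, star_eigenvector_dotProduct_eigenvector]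

theorem sum_normSq_star_eigenvector_dotProduct (y : d → ℂ) :
    ∑ j, Complex.normSq (star (hA.eigenvector j) ⬝ᵥ y) = (star y ⬝ᵥ y).re := by
  rw [← congrArg (fun v => (star y ⬝ᵥ v).re) (hA.sum_star_eigenvector_dotProduct_smul y)]
  simp only [dotProduct_sum, dotProduct_smul, smul_eq_mul, Complex.re_sum]
  refine Finset.sum_congr rfl fun j _ => ?_
  rw [star_dotProduct y, Complex.star_def, Complex.mul_conj, Complex.ofReal_re]

theorem eq_ensemble : A = ensemble hA.eigenvalues hA.eigenvector := by
  refine ext_iff_mulVec.mpr fun y => ?_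
  conv_lhs => rw [← hA.sum_star_eigenvector_dotProduct_smul y]
  simp only [ensemble_mulVec, mulVec_sum, mulVec_smul, mulVec_eigenvector, smul_smul, mul_comm]

theorem star_dotProduct_mulVec_eq_sum (y : d → ℂ) :
    star y ⬝ᵥ (A *ᵥ y) =
      ((∑ j, hA.eigenvalues j * Complex.normSq (star (hA.eigenvector j) ⬝ᵥ y) : ℝ) : ℂ) := by
  conv_lhs => rw [hA.eq_ensemble]
  exact star_dotProduct_ensemble_mulVec _ _ y

/-- The sum is `⟨x, A⁺ x⟩` for the Moore–Penrose inverse `A⁺`, thanks to the junk value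
`a / 0 = 0`. -/
theorem mul_sum_normSq_div_eigenvalues_le_one {s : ℝ} (hs : 0 ≤ s) (x : d → ℂ)
    (hx : ∀ y, s * Complex.normSq (star x ⬝ᵥ y) ≤ (star y ⬝ᵥ (A *ᵥ y)).re) :
    s * ∑ j, Complex.normSq (star (hA.eigenvector j) ⬝ᵥ x) / hA.eigenvalues j ≤ 1 := by
  set a : d → ℂ := fun j => star (hA.eigenvector j) ⬝ᵥ x
  set c : ℝ := ∑ j, Complex.normSq (a j) / hA.eigenvalues j
  -- `v = A⁺ x`, so that `⟨x, v⟩ = ⟨v, A v⟩ = c` and the hypothesis at `v` reads `s c² ≤ c`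
  set v : d → ℂ := ∑ j, (a j / hA.eigenvalues j) • hA.eigenvector j
  have hxv : star x ⬝ᵥ v = c := by
    simp only [v, c, dotProduct_sum, dotProduct_smul, smul_eq_mul]
    push_cast
    refine Finset.sum_congr rfl fun j _ => ?_
    rw [star_dotProduct x, ← Complex.mul_conj, Complex.star_def]
    ring
  have hvAv : (star v ⬝ᵥ (A *ᵥ v)).re = c := by
    simp only [hA.star_dotProduct_mulVec_eq_sum, Complex.ofReal_re, v,
      star_eigenvector_dotProduct_sum_smul, map_div₀, Complex.normSq_ofReal, c]
    refine Finset.sum_congr rfl fun j _ => ?_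
    rcases eq_or_ne (hA.eigenvalues j) 0 with h | h
    · simp [h]
    · field_simp
  have h := hx v
  rw [hxv, hvAv, Complex.normSq_ofReal] at h
  rcases le_or_gt c 0 with hc | hc <;> nlinarith

theorem star_eigenvector_dotProduct_eigenvector_of_mul_eq_zero {B : Matrix d d ℂ}
    (hB : B.IsHermitian) (hAB : A * B = 0) {i j : d} (hi : hA.eigenvalues i ≠ 0)
    (hj : hB.eigenvalues j ≠ 0) :
    star (hA.eigenvector i) ⬝ᵥ hB.eigenvector j = 0 := by
  have hAe : A *ᵥ hB.eigenvector j = 0 := by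
    have : (hB.eigenvalues j : ℂ) • (A *ᵥ hB.eigenvector j) = 0 := by
      rw [← mulVec_smul, ← hB.mulVec_eigenvector, mulVec_mulVec, hAB, zero_mulVec]
    exact (smul_eq_zero.mp this).resolve_left (by exact_mod_cast hj)
  have h := hA.star_eigenvector_dotProduct_mulVec i (hB.eigenvector j)
  rw [hAe, dotProduct_zero] at h
  exact (mul_eq_zero.mp h.symm).resolve_left (by exact_mod_cast hi)

theorem vnEntropy_eq_sum_negMulLog : vnEntropy A = ∑ j, Real.negMulLog (hA.eigenvalues j) := by
  simp only [vnEntropy, dif_pos hA, Real.negMulLog, neg_mul, Finset.sum_neg_distrib]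

end IsHermitian

section Entropy

variable [DecidableEq d] [Fintype ι] (t : ι → ℝ) (g : ι → d → ℂ)

theorem sum_mul_normSq_star_eigenvector_dotProduct (j : d) :
    ∑ k, t k * Complex.normSq (star ((isHermitian_ensemble t g).eigenvector j) ⬝ᵥ g k) =
      (isHermitian_ensemble t g).eigenvalues j := by
  have h := (isHermitian_ensemble t g).eigenvalues_eq j
  rw [RCLike.re_to_complex, ← IsHermitian.eigenvector, star_dotProduct_ensemble_mulVec,
    Complex.ofReal_re] at h
  rw [h]
  refine Finset.sum_congr rfl fun k _ => ?_
  rw [star_dotProduct (g k), Complex.star_def, Complex.normSq_conj]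

theorem sum_mul_normSq_star_eigenvector_dotProduct_of_unit (hg : ∀ k, star (g k) ⬝ᵥ g k = 1)
    (k : ι) :
    ∑ j, t k * Complex.normSq (star ((isHermitian_ensemble t g).eigenvector j) ⬝ᵥ g k) = t k := by
  rw [← Finset.mul_sum, IsHermitian.sum_normSq_star_eigenvector_dotProduct, hg k, Complex.one_re,
    mul_one]

theorem vnEntropy_ensemble_le (ht : ∀ k, 0 ≤ t k) (hg : ∀ k, star (g k) ⬝ᵥ g k = 1) :
    vnEntropy (ensemble t g) ≤ ∑ k, Real.negMulLog (t k) := by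
  set hX := isHermitian_ensemble t g
  rw [hX.vnEntropy_eq_sum_negMulLog]
  refine Real.sum_negMulLog_le_of_marginals
    (fun j k => t k * Complex.normSq (star (hX.eigenvector j) ⬝ᵥ g k)) _ _
    (fun j k => mul_nonneg (ht k) (Complex.normSq_nonneg _))
    (sum_mul_normSq_star_eigenvector_dotProduct t g)
    (sum_mul_normSq_star_eigenvector_dotProduct_of_unit t g hg) fun k => ?_
  have hdom : ∀ y, t k * Complex.normSq (star (g k) ⬝ᵥ y) ≤
      (star y ⬝ᵥ (ensemble t g *ᵥ y)).re := fun y => by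
    rw [star_dotProduct_ensemble_mulVec, Complex.ofReal_re]
    exact Finset.single_le_sum (f := fun l => t l * Complex.normSq (star (g l) ⬝ᵥ y))
      (fun l _ => mul_nonneg (ht l) (Complex.normSq_nonneg _)) (Finset.mem_univ k)
  calc ∑ j, t k * Complex.normSq (star (hX.eigenvector j) ⬝ᵥ g k) * (t k / hX.eigenvalues j)
      = t k * (t k * ∑ j, Complex.normSq (star (hX.eigenvector j) ⬝ᵥ g k) /
          hX.eigenvalues j) := by
        simp only [Finset.mul_sum]
        exact Finset.sum_congr rfl fun j _ => by ring
    _ ≤ t k * 1 := mul_le_mul_of_nonneg_left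
        (hX.mul_sum_normSq_div_eigenvalues_le_one (ht k) (g k) hdom) (ht k)
    _ = t k := mul_one _

theorem vnEntropy_ensemble_of_orthonormal (hg : ∀ k, star (g k) ⬝ᵥ g k = 1)
    (horth : ∀ k l, k ≠ l → t k ≠ 0 → t l ≠ 0 → star (g k) ⬝ᵥ g l = 0) :
    vnEntropy (ensemble t g) = ∑ k, Real.negMulLog (t k) := by
  set hX := isHermitian_ensemble t g
  rw [hX.vnEntropy_eq_sum_negMulLog]
  refine Real.sum_negMulLog_eq_of_marginals
    (fun j k => t k * Complex.normSq (star (hX.eigenvector j) ⬝ᵥ g k)) _ _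
    (sum_mul_normSq_star_eigenvector_dotProduct t g)
    (sum_mul_normSq_star_eigenvector_dotProduct_of_unit t g hg) fun j k hjk => ?_
  have hk : t k ≠ 0 := left_ne_zero_of_mul hjk
  have ha : star (hX.eigenvector j) ⬝ᵥ g k ≠ 0 := by
    simpa using right_ne_zero_of_mul hjk
  have h := hX.star_eigenvector_dotProduct_mulVec j (g k)
  rw [ensemble_mulVec_of_orthonormal t g hg horth hk, dotProduct_smul, smul_eq_mul] at h
  exact_mod_cast (mul_right_cancel₀ ha h).symm

end Entropy

section Blocks

variable [DecidableEq d] {N : Type*} [Fintype N]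

theorem vnEntropy_sum_of_mul_eq_zero {A : N → Matrix d d ℂ} (hA : ∀ n, (A n).IsHermitian)
    (hAA : ∀ n m, n ≠ m → A n * A m = 0) :
    vnEntropy (∑ n, A n) = ∑ n, ∑ i, Real.negMulLog ((hA n).eigenvalues i) := by
  have horth : ∀ p q : N × d, p ≠ q → (hA p.1).eigenvalues p.2 ≠ 0 →
      (hA q.1).eigenvalues q.2 ≠ 0 →
      star ((hA p.1).eigenvector p.2) ⬝ᵥ (hA q.1).eigenvector q.2 = 0 := by
    rintro ⟨n, i⟩ ⟨m, j⟩ hpq hp hq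
    by_cases hnm : n = m
    · subst hnm
      exact ((hA n).star_eigenvector_dotProduct_eigenvector i j).trans
        (if_neg fun h => hpq (by rw [h]))
    · exact (hA n).star_eigenvector_dotProduct_eigenvector_of_mul_eq_zero (hA m) (hAA n m hnm)
        hp hq
  have hsum : ∑ n, A n = ensemble (fun p : N × d => (hA p.1).eigenvalues p.2)
      fun p => (hA p.1).eigenvector p.2 := by
    rw [Finset.sum_congr rfl fun n _ => (hA n).eq_ensemble]
    exact sum_ensemble _ _
  rw [hsum, vnEntropy_ensemble_of_orthonormal (fun p : N × d => (hA p.1).eigenvalues p.2)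
    (fun p => (hA p.1).eigenvector p.2)
    (fun p => (hA p.1).star_eigenvector_dotProduct_self p.2) horth]
  exact Fintype.sum_prod_type _

theorem vnEntropy_sum_mul_mul_conjTranspose_le {A : N → Matrix d d ℂ}
    (hA : ∀ n, (A n).PosSemidef) {U : N → Matrix d d ℂ} (hU : ∀ n, (U n)ᴴ * U n = 1) :
    vnEntropy (∑ n, U n * A n * (U n)ᴴ) ≤
      ∑ n, ∑ i, Real.negMulLog ((hA n).isHermitian.eigenvalues i) := by
  have hconj : ∀ n, U n * A n * (U n)ᴴ = ensemble (hA n).isHermitian.eigenvalues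
      fun i => U n *ᵥ (hA n).isHermitian.eigenvector i := fun n => by
    conv_lhs => rw [(hA n).isHermitian.eq_ensemble]
    exact mul_ensemble_mul_conjTranspose _ _ _
  have hunit : ∀ p : N × d, star (U p.1 *ᵥ (hA p.1).isHermitian.eigenvector p.2) ⬝ᵥ
      (U p.1 *ᵥ (hA p.1).isHermitian.eigenvector p.2) = 1 := fun p => by
    rw [star_mulVec, dotProduct_mulVec, vecMul_vecMul, hU p.1, vecMul_one,
      (hA p.1).isHermitian.star_eigenvector_dotProduct_self]
  rw [Finset.sum_congr rfl fun n _ => hconj n, sum_ensemble, ← Fintype.sum_prod_type']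
  exact vnEntropy_ensemble_le _ _ (fun p => (hA p.1).eigenvalues_nonneg p.2) hunit

end Blocks

end Matrix

theorem maxwell_entropy_le_lueders_general {N d : Type*} [Fintype N] [Fintype d] [DecidableEq d]
    (P : N → Matrix d d ℂ)
    (hPh : ∀ n, (P n).IsHermitian)
    (hPo : ∀ n m, n ≠ m → P n * P m = 0)
    (U : N → Matrix d d ℂ) (hU : ∀ n, U n * (U n)ᴴ = 1 ∧ (U n)ᴴ * U n = 1)
    (ρ : Matrix d d ℂ) (hρ : ρ.PosSemidef) :
    vnEntropy (∑ n, U n * P n * ρ * P n * (U n)ᴴ) ≤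
      vnEntropy (∑ n, P n * ρ * P n) := by
  have hB : ∀ n, (P n * ρ * P n).PosSemidef := fun n => by
    simpa only [(hPh n).eq] using hρ.mul_mul_conjTranspose_same (P n)
  have hBB : ∀ n m, n ≠ m → P n * ρ * P n * (P m * ρ * P m) = 0 := fun n m hnm => by
    rw [Matrix.mul_assoc, ← Matrix.mul_assoc (P n), ← Matrix.mul_assoc (P n), hPo n m hnm,
      Matrix.zero_mul, Matrix.zero_mul, Matrix.mul_zero]
  calc vnEntropy (∑ n, U n * P n * ρ * P n * (U n)ᴴ)
      = vnEntropy (∑ n, U n * (P n * ρ * P n) * (U n)ᴴ) := by simp only [Matrix.mul_assoc]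
    _ ≤ ∑ n, ∑ i, Real.negMulLog ((hB n).isHermitian.eigenvalues i) :=
        vnEntropy_sum_mul_mul_conjTranspose_le hB fun n => (hU n).2
    _ = vnEntropy (∑ n, P n * ρ * P n) :=
        (vnEntropy_sum_of_mul_eq_zero (fun n => (hB n).isHermitian) hBB).symm

theorem maxwell_entropy_le_lueders {N d : Type*} [Fintype N] [Fintype d] [DecidableEq d]
    (P : N → Matrix d d ℂ)
    (hPh : ∀ n, (P n).IsHermitian) (hPi : ∀ n, P n * P n = P n)
    (hPo : ∀ n m, n ≠ m → P n * P m = 0) (hPsum : ∑ n, P n = 1)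
    (U : N → Matrix d d ℂ) (hU : ∀ n, U n * (U n)ᴴ = 1 ∧ (U n)ᴴ * U n = 1)
    (ρ : Matrix d d ℂ) (hρ : ρ.PosSemidef) (htr : ρ.trace = 1) :
    vnEntropy (∑ n, U n * P n * ρ * P n * (U n)ᴴ) ≤
      vnEntropy (∑ n, P n * ρ * P n) :=
  maxwell_entropy_le_lueders_general P hPh hPo U hU ρ hρ
end

section
/- Entropy non-decrease under Lüders measurement: for a complete family of mutually orthogonal projections (P_n) and any density matrix ρ on a finite-dimensional Hilbert space, S(ρ) ≤ S(∑_n P_n ρ P_n). -/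
open Matrix
open scoped ComplexOrder

/-
Diagonalise `ρ = U diag(λ) U†` and `Φ ρ = ∑ₙ Kₙ ρ Kₙ† = V diag(μ) V†`. With `Mₙ = V† Kₙ U`
one gets `diag(μ) = ∑ₙ Mₙ diag(λ) Mₙ†`, so `μ = B λ` for `B_ji = ∑ₙ |(Mₙ)_ji|²`.
The two conditions `∑ Kₙ Kₙ† = 1 = ∑ Kₙ† Kₙ` (both hold for a complete family of orthogonal
projections `Kₙ = Pₙ`) make the rows and columns of `B` sum to one. For a doubly stochastic
`B` and the concave `η(t) = -t log t`, Jensen on each row and the column sums give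
`∑ᵢ η(λᵢ) ≤ ∑ⱼ η((B λ)ⱼ)`.
-/

theorem ConcaveOn.sum_le_sum_mulVec_of_mem_doublyStochastic {ι : Type*} [Fintype ι]
    [DecidableEq ι] {s : Set ℝ} {f : ℝ → ℝ} (hf : ConcaveOn ℝ s f) {B : Matrix ι ι ℝ}
    (hB : B ∈ doublyStochastic ℝ ι) {x : ι → ℝ} (hx : ∀ i, x i ∈ s) :
    ∑ i, f (x i) ≤ ∑ j, f ((B *ᵥ x) j) :=
  calc ∑ i, f (x i) = ∑ i, (∑ j, B j i) * f (x i) := by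
        simp [sum_col_of_mem_doublyStochastic hB]
    _ = ∑ j, ∑ i, B j i • f (x i) := by
        simp only [Finset.sum_mul, smul_eq_mul]; exact Finset.sum_comm
    _ ≤ ∑ j, f (∑ i, B j i • x i) := Finset.sum_le_sum fun j _ =>
        hf.le_map_sum (fun i _ => nonneg_of_mem_doublyStochastic hB)
          (sum_row_of_mem_doublyStochastic hB j) fun i _ => hx i
    _ = ∑ j, f ((B *ᵥ x) j) := by simp [mulVec, dotProduct]

namespace Matrix

variable {N d : Type*} [Fintype N]

def krausWeights (M : N → Matrix d d ℂ) : Matrix d d ℝ :=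
  of fun j i => ∑ n, Complex.normSq (M n j i)

theorem krausWeights_conjTranspose (M : N → Matrix d d ℂ) :
    krausWeights (fun n => (M n)ᴴ) = (krausWeights M)ᵀ := by
  ext j i
  simp [krausWeights]

theorem sum_mul_diagonal_mul_conjTranspose_apply_self [Fintype d] [DecidableEq d]
    (M : N → Matrix d d ℂ) (x : d → ℝ) (j : d) :
    (∑ n, M n * diagonal (RCLike.ofReal ∘ x) * (M n)ᴴ : Matrix d d ℂ) j j =
      ((krausWeights M *ᵥ x) j : ℂ) := by
  simp only [sum_apply, mul_apply, diagonal_apply, mul_ite, mul_zero,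
    Finset.sum_ite_eq', Finset.mem_univ, if_true, conjTranspose_apply, krausWeights, mulVec,
    dotProduct, of_apply, Finset.sum_mul]
  push_cast
  rw [Finset.sum_comm]
  refine Finset.sum_congr rfl fun i _ => Finset.sum_congr rfl fun n _ => ?_
  rw [← Complex.mul_conj, Function.comp_apply, mul_right_comm]
  rfl

theorem krausWeights_mulVec_one [Fintype d] [DecidableEq d] {M : N → Matrix d d ℂ}
    (h : ∑ n, M n * (M n)ᴴ = 1) : krausWeights M *ᵥ 1 = 1 := funext fun j => by
  have := sum_mul_diagonal_mul_conjTranspose_apply_self M 1 j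
  simp only [Function.comp_def, Pi.one_apply, map_one, diagonal_one, mul_one, h,
    one_apply_eq] at this
  exact_mod_cast this.symm

theorem krausWeights_mem_doublyStochastic [Fintype d] [DecidableEq d] {M : N → Matrix d d ℂ}
    (h₁ : ∑ n, M n * (M n)ᴴ = 1) (h₂ : ∑ n, (M n)ᴴ * M n = 1) :
    krausWeights M ∈ doublyStochastic ℝ d := by
  refine ⟨fun j i => Finset.sum_nonneg fun n _ => Complex.normSq_nonneg _,
    krausWeights_mulVec_one h₁, ?_⟩
  rw [← mulVec_transpose, ← krausWeights_conjTranspose]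
  exact krausWeights_mulVec_one (by simpa only [conjTranspose_conjTranspose] using h₂)

theorem sum_conj_mul_conjTranspose_eq_one [Fintype d] [DecidableEq d] {K : N → Matrix d d ℂ}
    (hK : ∑ n, K n * (K n)ᴴ = 1) {U V : Matrix d d ℂ} (hU : U * Uᴴ = 1) (hV : V * Vᴴ = 1) :
    ∑ n, V * K n * U * (V * K n * U)ᴴ = 1 :=
  calc ∑ n, V * K n * U * (V * K n * U)ᴴ = ∑ n, V * (K n * (K n)ᴴ) * Vᴴ :=
        Finset.sum_congr rfl fun n _ => by
          simp only [conjTranspose_mul, Matrix.mul_assoc]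
          rw [← Matrix.mul_assoc U, hU, Matrix.one_mul]
    _ = 1 := by rw [← Finset.sum_mul, ← Finset.mul_sum, hK, Matrix.mul_one, hV]

theorem IsHermitian.exists_mem_doublyStochastic_eigenvalues_eq_mulVec [Fintype d] [DecidableEq d]
    {K : N → Matrix d d ℂ} (h₁ : ∑ n, K n * (K n)ᴴ = 1) (h₂ : ∑ n, (K n)ᴴ * K n = 1)
    {ρ : Matrix d d ℂ} (hρ : ρ.IsHermitian) (hΦρ : (∑ n, K n * ρ * (K n)ᴴ).IsHermitian) :
    ∃ B ∈ doublyStochastic ℝ d, hΦρ.eigenvalues = B *ᵥ hρ.eigenvalues := by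
  set U : Matrix d d ℂ := (hρ.eigenvectorUnitary : Matrix d d ℂ)
  set V : Matrix d d ℂ := (hΦρ.eigenvectorUnitary : Matrix d d ℂ)
  set M : N → Matrix d d ℂ := fun n => Vᴴ * K n * U
  have hU : U * Uᴴ = 1 := mem_unitaryGroup_iff.mp hρ.eigenvectorUnitary.2
  have hU' : Uᴴ * U = 1 := mem_unitaryGroup_iff'.mp hρ.eigenvectorUnitary.2
  have hV : V * Vᴴ = 1 := mem_unitaryGroup_iff.mp hΦρ.eigenvectorUnitary.2
  have hV' : Vᴴ * V = 1 := mem_unitaryGroup_iff'.mp hΦρ.eigenvectorUnitary.2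
  have hM₁ : ∑ n, M n * (M n)ᴴ = 1 :=
    sum_conj_mul_conjTranspose_eq_one h₁ hU (by rwa [conjTranspose_conjTranspose])
  have hM₂ : ∑ n, (M n)ᴴ * M n = 1 := by
    have := sum_conj_mul_conjTranspose_eq_one (K := fun n => (K n)ᴴ)
      (by simpa only [conjTranspose_conjTranspose] using h₂) (U := V) (V := Uᴴ) hV
      (by rwa [conjTranspose_conjTranspose])
    simpa only [M, conjTranspose_mul, conjTranspose_conjTranspose, Matrix.mul_assoc] using this
  have hρ_diag : ρ = U * diagonal (RCLike.ofReal ∘ hρ.eigenvalues) * Uᴴ := hρ.spectral_theorem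
  have hΦρ_diag : diagonal (RCLike.ofReal ∘ hΦρ.eigenvalues)
      = Vᴴ * (∑ n, K n * ρ * (K n)ᴴ) * V := by
    rw [← hΦρ.conjStarAlgAut_star_eigenvectorUnitary, Unitary.conjStarAlgAut_star_apply]
    rfl
  have hdiag : diagonal (RCLike.ofReal ∘ hΦρ.eigenvalues)
      = ∑ n, M n * diagonal (RCLike.ofReal ∘ hρ.eigenvalues) * (M n)ᴴ := by
    rw [hΦρ_diag]
    conv_lhs => rw [hρ_diag]
    simp only [M, conjTranspose_mul, conjTranspose_conjTranspose, Finset.mul_sum, Finset.sum_mul,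
      Matrix.mul_assoc]
  refine ⟨krausWeights M, krausWeights_mem_doublyStochastic hM₁ hM₂, funext fun j => ?_⟩
  have := congr_fun (congr_fun hdiag j) j
  rw [sum_mul_diagonal_mul_conjTranspose_apply_self, diagonal_apply_eq, Function.comp_apply] at this
  exact Complex.ofReal_injective this

end Matrix

theorem vnEntropy_eq_sum_negMulLog {d : Type*} [Fintype d] [DecidableEq d] {A : Matrix d d ℂ}
    (hA : A.IsHermitian) : vnEntropy A = ∑ i, Real.negMulLog (hA.eigenvalues i) := by
  simp [vnEntropy, hA, Real.negMulLog, ← Finset.sum_neg_distrib]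

theorem vnEntropy_le_vnEntropy_sum_mul_mul_conjTranspose {N d : Type*} [Fintype N] [Fintype d]
    [DecidableEq d] {K : N → Matrix d d ℂ} (h₁ : ∑ n, K n * (K n)ᴴ = 1)
    (h₂ : ∑ n, (K n)ᴴ * K n = 1) {ρ : Matrix d d ℂ} (hρ : ρ.PosSemidef) :
    vnEntropy ρ ≤ vnEntropy (∑ n, K n * ρ * (K n)ᴴ) := by
  have hΦρ : (∑ n, K n * ρ * (K n)ᴴ).IsHermitian :=
    isSelfAdjoint_sum _ fun n _ => isHermitian_mul_mul_conjTranspose (K n) hρ.1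
  obtain ⟨B, hB, hμ⟩ := hρ.1.exists_mem_doublyStochastic_eigenvalues_eq_mulVec h₁ h₂ hΦρ
  rw [vnEntropy_eq_sum_negMulLog hρ.1, vnEntropy_eq_sum_negMulLog hΦρ, hμ]
  exact Real.concaveOn_negMulLog.sum_le_sum_mulVec_of_mem_doublyStochastic hB
    hρ.eigenvalues_nonneg

theorem lueders_entropy_nondecrease_general {N d : Type*} [Fintype N] [Fintype d] [DecidableEq d]
    (P : N → Matrix d d ℂ)
    (hPh : ∀ n, (P n).IsHermitian) (hPi : ∀ n, P n * P n = P n)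
    (hPsum : ∑ n, P n = 1)
    (ρ : Matrix d d ℂ) (hρ : ρ.PosSemidef) :
    vnEntropy ρ ≤ vnEntropy (∑ n, P n * ρ * P n) := by
  have hP : ∀ n, (P n)ᴴ = P n := fun n => (hPh n).eq
  have hPP : ∑ n, P n * (P n)ᴴ = 1 := by simp only [hP, hPi, hPsum]
  have hPP' : ∑ n, (P n)ᴴ * P n = 1 := by simp only [hP, hPi, hPsum]
  simpa only [hP] using vnEntropy_le_vnEntropy_sum_mul_mul_conjTranspose hPP hPP' hρ

theorem lueders_entropy_nondecrease {N d : Type*} [Fintype N] [Fintype d] [DecidableEq d]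
    (P : N → Matrix d d ℂ)
    (hPh : ∀ n, (P n).IsHermitian) (hPi : ∀ n, P n * P n = P n)
    (hPo : ∀ n m, n ≠ m → P n * P m = 0) (hPsum : ∑ n, P n = 1)
    (ρ : Matrix d d ℂ) (hρ : ρ.PosSemidef) (htr : ρ.trace = 1) :
    vnEntropy ρ ≤ vnEntropy (∑ n, P n * ρ * P n) :=
  lueders_entropy_nondecrease_general P hPh hPi hPsum ρ hρ
end

section
/- For the simple QMD model with demon, the total final entropy exceeds the initial entropy: S1 + S2 > S0 for 0 < p < 1, where S0 = −p log(p/2) − (1−p) log((1−p)/2), S1 = −p log p − (1−p) log((1−p)/2), and S2 = −(p/2) log(p/2) − (1−p/2) log(1−p/2). -/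
open Real

lemma entropy_above_chord (q : ℝ) (hq0 : 0 < q) (hq1 : q < 1/2) :
    Real.negMulLog q + Real.negMulLog (1 - q) > 2 * q * Real.log 2 := by
  have hsc := Real.strictConcaveOn_negMulLog.2
  have ha : (0:ℝ) < 1 - 2*q := by linarith
  have hb : (0:ℝ) < 2*q := by linarith
  have h1 := hsc (x := 0) (by simp) (y := 1/2) (by norm_num)
    (by norm_num) ha hb (by ring)
  have h2 := hsc (x := 1) (by norm_num) (y := 1/2) (by norm_num)
    (by norm_num) ha hb (by ring)
  have e0 : Real.negMulLog 0 = 0 := by simp [Real.negMulLog]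
  have e1 : Real.negMulLog 1 = 0 := by simp [Real.negMulLog]
  have eh : Real.negMulLog (1/2) = (1/2) * Real.log 2 := by
    simp [Real.negMulLog, Real.log_div, Real.log_one]
  simp only [smul_eq_mul, e0, e1, eh] at h1 h2
  have hx1 : (1 - 2*q) * 0 + 2*q * (1/2 : ℝ) = q := by ring
  have hx2 : (1 - 2*q) * 1 + 2*q * (1/2 : ℝ) = 1 - q := by ring
  rw [hx1] at h1
  rw [hx2] at h2
  nlinarith [h1, h2]

theorem simple_qmd_total_entropy_increase (p : ℝ) (hp0 : 0 < p) (hp1 : p < 1)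
    (S0 S1 S2 : ℝ)
    (hS0 : S0 = -p * Real.log (p / 2) - (1 - p) * Real.log ((1 - p) / 2))
    (hS1 : S1 = -p * Real.log p - (1 - p) * Real.log ((1 - p) / 2))
    (hS2 : S2 = -(p / 2) * Real.log (p / 2) - (1 - p / 2) * Real.log (1 - p / 2)) :
    S1 + S2 > S0 := by
  have hlp : Real.log (p / 2) = Real.log p - Real.log 2 :=
    Real.log_div (ne_of_gt hp0) two_ne_zero
  have key := entropy_above_chord (p/2) (by linarith) (by linarith)
  simp only [Real.negMulLog] at key
  rw [hS0, hS1, hS2, hlp]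
  nlinarith [key]
end
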